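/- arXiv:math/0204084 — 3 statements merged into one kernel-verified Lean document; each statement's English description precedes it below -/
import Mathlib

section
/- Let n_k : [0,1] → [0,∞) be differentiable with n_k(0) = 0 and |n_k'(t)| ≤ (C/k)(n_k(t)^{1/2} + n_k(t)) for all t ∈ [0,1], where C > 0 and k ≥ 1. Then n_k(t) ≤ (exp(Ct/(2k)) - 1)² for all t ∈ [0,1]. -/
theorem stmt2 (C k : ℝ) (hC : 0 < C) (hk : 1 ≤ k) (n : ℝ → ℝ)
    (hdiff : Differentiable ℝ n) (h0 : n 0 = 0)
    (hnonneg : ∀ t ∈ Set.Icc (0:ℝ) 1, 0 ≤ n t)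
    (hineq : ∀ t ∈ Set.Icc (0:ℝ) 1,
      |deriv n t| ≤ C / k * (Real.sqrt (n t) + n t)) :
    ∀ t ∈ Set.Icc (0:ℝ) 1, n t ≤ (Real.exp (C * t / (2 * k)) - 1) ^ 2 := by
  have hk0 : (0:ℝ) < k := lt_of_lt_of_le one_pos hk
  set K : ℝ := C / (2 * k) with hK
  have hKpos : 0 < K := div_pos hC (by linarith)
  -- main estimate for every ε > 0
  have key : ∀ ε > (0:ℝ), ∀ t ∈ Set.Icc (0:ℝ) 1,
      Real.sqrt (n t + ε) ≤ Real.sqrt ε * Real.exp (K * t) + (Real.exp (K * t) - 1) := by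
    intro ε hε t ht
    have hpos : ∀ s ∈ Set.Icc (0:ℝ) 1, 0 < n s + ε := fun s hs => by
      have := hnonneg s hs; linarith
    have hcont : ContinuousOn (fun s => Real.sqrt (n s + ε)) (Set.Icc 0 1) :=
      (Real.continuous_sqrt.comp (hdiff.continuous.add continuous_const)).continuousOn
    have hder : ∀ s ∈ Set.Ico (0:ℝ) 1,
        HasDerivWithinAt (fun s => Real.sqrt (n s + ε))
          (deriv n s / (2 * Real.sqrt (n s + ε))) (Set.Ici s) s := by
      intro s hs
      have hne : n s + ε ≠ 0 := (hpos s (Set.mem_Icc_of_Ico hs)).ne'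
      have h1 : HasDerivAt (fun s => n s + ε) (deriv n s) s :=
        ((hdiff s).hasDerivAt).add_const ε
      have := (Real.hasDerivAt_sqrt hne).comp s h1
      refine this.hasDerivWithinAt.congr_deriv ?_
      ring
    have hbound : ∀ s ∈ Set.Ico (0:ℝ) 1,
        ‖deriv n s / (2 * Real.sqrt (n s + ε))‖ ≤ K * ‖Real.sqrt (n s + ε)‖ + K := by
      intro s hs
      have hs' : s ∈ Set.Icc (0:ℝ) 1 := Set.mem_Icc_of_Ico hs
      have hn : 0 ≤ n s := hnonneg s hs'
      have hpe : 0 < n s + ε := hpos s hs'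
      have hsq : 0 < Real.sqrt (n s + ε) := Real.sqrt_pos.mpr hpe
      rw [Real.norm_eq_abs, Real.norm_eq_abs, abs_of_pos hsq, abs_div,
        abs_of_pos (by positivity : (0:ℝ) < 2 * Real.sqrt (n s + ε))]
      rw [div_le_iff₀ (by positivity)]
      have h1 : Real.sqrt (n s) ≤ Real.sqrt (n s + ε) :=
        Real.sqrt_le_sqrt (by linarith)
      have h2 : n s ≤ Real.sqrt (n s) * Real.sqrt (n s + ε) := by
        calc n s = Real.sqrt (n s) * Real.sqrt (n s) := (Real.mul_self_sqrt hn).symm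
          _ ≤ Real.sqrt (n s) * Real.sqrt (n s + ε) := by
              exact mul_le_mul_of_nonneg_left h1 (Real.sqrt_nonneg _)
      calc |deriv n s| ≤ C / k * (Real.sqrt (n s) + n s) := hineq s hs'
        _ ≤ C / k * (Real.sqrt (n s + ε) + Real.sqrt (n s + ε) * Real.sqrt (n s + ε)) := by
            apply mul_le_mul_of_nonneg_left _ (le_of_lt (div_pos hC hk0))
            have h3 : Real.sqrt (n s) * Real.sqrt (n s + ε)
                ≤ Real.sqrt (n s + ε) * Real.sqrt (n s + ε) :=
              mul_le_mul_of_nonneg_right h1 (Real.sqrt_nonneg _)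
            linarith
        _ = (K * Real.sqrt (n s + ε) + K) * (2 * Real.sqrt (n s + ε)) := by
            rw [hK]; field_simp; ring
    have := norm_le_gronwallBound_of_norm_deriv_right_le hcont hder
      (δ := Real.sqrt ε) (by rw [Real.norm_eq_abs, abs_of_nonneg (Real.sqrt_nonneg _), h0, zero_add])
      hbound t ht
    rw [Real.norm_eq_abs, abs_of_nonneg (Real.sqrt_nonneg _)] at this
    rw [gronwallBound_of_K_ne_0 hKpos.ne'] at this
    simpa [div_self hKpos.ne', sub_zero] using this
  intro t ht
  -- take the limit ε → 0⁺
  have hlim : Filter.Tendsto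
      (fun ε : ℝ => (Real.sqrt ε * Real.exp (K * t) + (Real.exp (K * t) - 1)) ^ 2 - ε)
      (nhdsWithin 0 (Set.Ioi 0)) (nhds ((Real.exp (K * t) - 1) ^ 2)) := by
    have : Filter.Tendsto
        (fun ε : ℝ => (Real.sqrt ε * Real.exp (K * t) + (Real.exp (K * t) - 1)) ^ 2 - ε)
        (nhds 0) (nhds ((Real.sqrt 0 * Real.exp (K * t) + (Real.exp (K * t) - 1)) ^ 2 - 0)) := by
      apply Filter.Tendsto.sub _ Filter.tendsto_id
      exact (((Real.continuous_sqrt.tendsto 0).mul_const _).add_const _).pow 2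
    simpa using this.mono_left nhdsWithin_le_nhds
  have hge : ∀ ε ∈ Set.Ioi (0:ℝ),
      n t ≤ (Real.sqrt ε * Real.exp (K * t) + (Real.exp (K * t) - 1)) ^ 2 - ε := by
    intro ε hε
    have hε' : (0:ℝ) < ε := hε
    have h := key ε hε' t ht
    have hpe : 0 ≤ n t + ε := by have := hnonneg t ht; linarith
    have := Real.sqrt_le_sqrt (le_refl (n t + ε))
    have h2 : n t + ε ≤ (Real.sqrt ε * Real.exp (K * t) + (Real.exp (K * t) - 1)) ^ 2 := by
      have := pow_le_pow_left₀ (Real.sqrt_nonneg _) h 2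
      rwa [Real.sq_sqrt hpe] at this
    linarith
  have : n t ≤ (Real.exp (K * t) - 1) ^ 2 := by
    refine ge_of_tendsto hlim ?_
    filter_upwards [self_mem_nhdsWithin] using hge
  convert this using 3
  rw [hK]; ring
end

section
/- Let V be a finite-dimensional complex inner product space, W a subspace with orthogonal projection π, and suppose for each t, W(t) is a family of subspaces with differentiable families s_i(t) of bases satisfying s_i'(t) = u(t)(s_i(t)) for some family of linear maps u(t) : V → V. Then the derivative of the orthogonal projection π(t) onto W(t) satisfies π(t) ∘ π'(t) = π(t) ∘ u(t)* − π(t) ∘ u(t)* ∘ π(t), where u(t)* is the adjoint of u(t). -/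
theorem stmt9 {V : Type*} [NormedAddCommGroup V] [InnerProductSpace ℂ V]
    [FiniteDimensional ℂ V] {N : ℕ}
    (s : Fin N → ℝ → V) (u : ℝ → (V →L[ℂ] V))
    (hli : ∀ t, LinearIndependent ℂ fun i => s i t)
    (hs : ∀ i t, HasDerivAt (s i) (u t (s i t)) t)
    (P P' : ℝ → (V →L[ℂ] V))
    (hP : ∀ t, P t = (Submodule.span ℂ (Set.range fun i => s i t)).subtypeL.comp
      (Submodule.orthogonalProjection (Submodule.span ℂ (Set.range fun i => s i t))))
    (hP' : ∀ t, HasDerivAt P (P' t) t) (t : ℝ) :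
    (P t).comp (P' t) = (P t).comp (ContinuousLinearMap.adjoint (u t)) -
      ((P t).comp (ContinuousLinearMap.adjoint (u t))).comp (P t) := by
  set W : ℝ → Submodule ℂ V := fun t => Submodule.span ℂ (Set.range fun i => s i t) with hW
  -- self-adjointness of P
  have hPsa : ∀ τ, ContinuousLinearMap.adjoint (P τ) = P τ := by
    intro τ
    rw [hP τ, ← ContinuousLinearMap.star_eq_adjoint]
    exact (isSelfAdjoint_starProjection (W τ))
  -- self-adjointness of P'
  have hP'sa : ContinuousLinearMap.adjoint (P' t) = P' t := by
    have h1 : HasDerivAt (fun τ => star (P τ)) (star (P' t)) t := (hP' t).star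
    have h2 : (fun τ => star (P τ)) = P := by
      funext τ
      rw [ContinuousLinearMap.star_eq_adjoint, hPsa]
    rw [h2] at h1
    have := h1.unique (hP' t)
    rw [← ContinuousLinearMap.star_eq_adjoint]
    exact this
  -- P fixes elements of W
  have hPfix : ∀ τ x, x ∈ W τ → P τ x = x := by
    intro τ x hx
    rw [hP τ]
    exact Submodule.starProjection_eq_self_iff.2 hx
  -- P maps into W
  have hPmem : ∀ τ x, P τ x ∈ W τ := by
    intro τ x
    rw [hP τ]
    exact (Submodule.orthogonalProjection (W τ) x).2
  -- derivative identity on generators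
  have hgen : ∀ i, P' t (s i t) = u t (s i t) - P t (u t (s i t)) := by
    intro i
    have hPr : HasDerivAt (fun τ => (P τ).restrictScalars ℝ)
        ((P' t).restrictScalars ℝ) t :=
      (ContinuousLinearMap.restrictScalarsL ℂ V V ℝ ℝ).hasFDerivAt.comp_hasDerivAt
        t (hP' t)
    have h1 : HasDerivAt (fun τ => P τ (s i τ))
        (P' t (s i t) + P t (u t (s i t))) t := hPr.clm_apply (hs i t)
    have h2 : (fun τ => P τ (s i τ)) = s i := by
      funext τ
      exact hPfix τ (s i τ) (Submodule.subset_span ⟨i, rfl⟩)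
    rw [h2] at h1
    have := h1.unique (hs i t)
    rw [eq_sub_iff_add_eq, this]
  -- derivative identity on W
  have hWid : ∀ x ∈ W t, P' t x = u t x - P t (u t x) := by
    intro x hx
    have hle : W t ≤ LinearMap.ker
        (((P' t - (u t - (P t).comp (u t))) : V →L[ℂ] V) : V →ₗ[ℂ] V) := by
      rw [hW, Submodule.span_le]
      rintro _ ⟨i, rfl⟩
      simp only [SetLike.mem_coe, LinearMap.mem_ker, ContinuousLinearMap.coe_sub',
        Pi.sub_apply, ContinuousLinearMap.coe_comp', Function.comp_apply,
        ContinuousLinearMap.coe_coe]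
      rw [hgen i]
      abel
    have := hle hx
    simp only [LinearMap.mem_ker, ContinuousLinearMap.coe_sub', Pi.sub_apply,
      ContinuousLinearMap.coe_comp', Function.comp_apply,
      ContinuousLinearMap.coe_coe] at this
    rw [sub_eq_zero] at this
    simpa using this
  -- P' ∘ P = u ∘ P - P ∘ u ∘ P
  have hkey : (P' t).comp (P t) =
      (u t).comp (P t) - ((P t).comp (u t)).comp (P t) := by
    ext x
    simp only [ContinuousLinearMap.comp_apply, ContinuousLinearMap.sub_apply]
    exact hWid (P t x) (hPmem t x)
  have := congrArg ContinuousLinearMap.adjoint hkey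
  rw [ContinuousLinearMap.adjoint_comp, map_sub, ContinuousLinearMap.adjoint_comp,
    ContinuousLinearMap.adjoint_comp, ContinuousLinearMap.adjoint_comp,
    hPsa, hP'sa] at this
  rw [this]
  ext x
  simp [ContinuousLinearMap.comp_apply, hPfix t (P t x) (hPmem t x)]
end

section
/- Let a_k, b_k be sequences in a normed space with ‖a_k − b_k‖ → 0 and ‖a_k‖ → α, ‖b_k‖ → β. Then α = β. In particular, in the setting of the paper: if P_k T^{(k)}_{f∘φ} = T^{(k)}_f for isometries-up-to-o(1) P_k with ‖P_k T^{(k)}_{f∘φ} − T^{(k)}_{f∘φ}‖ → 0, then sup|f| = sup|f∘φ| and moreover sup|f − f∘φ| = 0. -/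
lemma key' (u v w : ℕ → ℝ) (α β : ℝ) (h : ∀ k, |u k - v k| ≤ w k)
    (hw : Filter.Tendsto w Filter.atTop (nhds 0))
    (hu : Filter.Tendsto u Filter.atTop (nhds α))
    (hv : Filter.Tendsto v Filter.atTop (nhds β)) : α = β := by
  have hd : Filter.Tendsto (fun k => u k - v k) Filter.atTop (nhds (α - β)) := hu.sub hv
  have hd0 : Filter.Tendsto (fun k => u k - v k) Filter.atTop (nhds 0) := by
    have := squeeze_zero_norm (f := fun k => u k - v k) (fun k => h k) hw
    exact this
  have := tendsto_nhds_unique hd hd0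
  linarith

theorem stmt12 {E : Type*} [NormedAddCommGroup E] (a b : ℕ → E) (α β : ℝ)
    (h1 : Filter.Tendsto (fun k => ‖a k - b k‖) Filter.atTop (nhds 0))
    (h2 : Filter.Tendsto (fun k => ‖a k‖) Filter.atTop (nhds α))
    (h3 : Filter.Tendsto (fun k => ‖b k‖) Filter.atTop (nhds β))
    {M : Type*} [TopologicalSpace M] [CompactSpace M]
    (Ek : ℕ → Type*) [∀ k, NormedAddCommGroup (Ek k)] [∀ k, NormedSpace ℂ (Ek k)]
    (T : ∀ k, C(M, ℂ) →ₗ[ℂ] Ek k)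
    (hT : ∀ g : C(M, ℂ),
      Filter.Tendsto (fun k => ‖T k g‖) Filter.atTop (nhds (⨆ x, ‖g x‖)))
    (φ : C(M, M)) (f : C(M, ℂ))
    (P : ∀ k, Ek k → Ek k)
    (hP : ∀ k, P k (T k (f.comp φ)) = T k f)
    (hPn : Filter.Tendsto (fun k => ‖P k (T k (f.comp φ)) - T k (f.comp φ)‖)
      Filter.atTop (nhds 0)) :
    α = β ∧ (⨆ x, ‖f x‖) = (⨆ x, ‖f (φ x)‖) ∧ (⨆ x, ‖f x - f (φ x)‖) = 0 := by
  have hdiff : Filter.Tendsto (fun k => ‖T k f - T k (f.comp φ)‖) Filter.atTop (nhds 0) := by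
    simpa [hP] using hPn
  refine ⟨?_, ?_, ?_⟩
  · exact key' (fun k => ‖a k‖) (fun k => ‖b k‖) (fun k => ‖a k - b k‖) α β
      (fun k => abs_norm_sub_norm_le (a k) (b k)) h1 h2 h3
  · have := key' (fun k => ‖T k f‖) (fun k => ‖T k (f.comp φ)‖)
      (fun k => ‖T k f - T k (f.comp φ)‖) _ _
      (fun k => abs_norm_sub_norm_le _ _) hdiff (hT f) (hT (f.comp φ))
    simpa using this
  · have h4 : Filter.Tendsto (fun k => ‖T k (f - f.comp φ)‖) Filter.atTop
        (nhds (⨆ x, ‖(f - f.comp φ) x‖)) := hT (f - f.comp φ)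
    have h5 : Filter.Tendsto (fun k => ‖T k (f - f.comp φ)‖) Filter.atTop (nhds 0) := by
      simpa [map_sub] using hdiff
    have := tendsto_nhds_unique h4 h5
    simpa using this
end
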